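/- arXiv:1605.02589 — 5 statements merged into one kernel-verified Lean document; each statement's English description precedes it below -/
import Mathlib

section
/- Let f be a non-negative, monotonic non-decreasing function on [a,b] with f ≥ e on [a,b]. Then there exist a point x ∈ [a,(a+b)/2) and a real number N ≥ e such that N ≤ f(t) ≤ e·N for all t in the interval (x - (b-a)/(20·(log f(x))²), x + (b-a)/(20·(log f(x))²)), and this interval is contained in [a,b]. -/
open Real Set

/-- Lemma on monotonic functions: if `f` is nonnegative, monotone non-decreasing on `[a,b]`
and `f ≥ e` there, then there is a point `x ∈ [a, (a+b)/2)` and `N ≥ e` such that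
`N ≤ f ≤ e·N` on the interval of radius `(b-a)/(20 log² f(x))` around `x`,
and this interval is contained in `[a,b]`. -/
theorem monotone_function_lemma (a b : ℝ) (hab : a < b) (f : ℝ → ℝ)
    (hmono : MonotoneOn f (Icc a b))
    (hnonneg : ∀ t ∈ Icc a b, 0 ≤ f t)
    (hge : ∀ t ∈ Icc a b, Real.exp 1 ≤ f t) :
    ∃ x ∈ Ico a ((a + b) / 2), ∃ N : ℝ, Real.exp 1 ≤ N ∧
      Ioo (x - (b - a) / (20 * (Real.log (f x))^2))
          (x + (b - a) / (20 * (Real.log (f x))^2)) ⊆ Icc a b ∧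
      ∀ t ∈ Ioo (x - (b - a) / (20 * (Real.log (f x))^2))
              (x + (b - a) / (20 * (Real.log (f x))^2)),
        N ≤ f t ∧ f t ≤ Real.exp 1 * N := by
  by_contra hcon
  push_neg at hcon
  have hba : (0:ℝ) < b - a := sub_pos.mpr hab
  have hfpos : ∀ t ∈ Icc a b, 0 < f t := fun t ht =>
    lt_of_lt_of_le (Real.exp_pos 1) (hge t ht)
  have hL1 : ∀ t ∈ Icc a b, 1 ≤ Real.log (f t) := fun t ht =>
    (Real.le_log_iff_exp_le (hfpos t ht)).mpr (hge t ht)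
  have hLm : ∀ s t, s ∈ Icc a b → t ∈ Icc a b → s ≤ t →
      Real.log (f s) ≤ Real.log (f t) := fun s t hs ht hst =>
    Real.log_le_log (hfpos s hs) (hmono hs ht hst)
  -- partial sums of 1/(j+1)^2
  obtain ⟨S, hSdef⟩ : ∃ S : ℕ → ℝ, S = fun k => ∑ j ∈ Finset.range k, (1:ℝ)/((j:ℝ)+1)^2 :=
    ⟨_, rfl⟩
  have hS0 : S 0 = 0 := by simp [hSdef]
  have hSsucc : ∀ k : ℕ, S (k+1) = S k + 1/((k:ℝ)+1)^2 := by
    intro k; simp [hSdef, Finset.sum_range_succ]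
  have hSnn : ∀ k, 0 ≤ S k := by
    intro k; rw [hSdef]
    exact Finset.sum_nonneg fun j _ => by positivity
  have hSle' : ∀ k : ℕ, S (k+1) ≤ 2 - 1/((k:ℝ)+1) := by
    intro k
    induction k with
    | zero => rw [hSsucc 0, hS0]; norm_num
    | succ k ih =>
      have h1 : (0:ℝ) < (k:ℝ)+1 := by positivity
      have h2 : (0:ℝ) < (k:ℝ)+2 := by positivity
      have hkey : 1/((k:ℝ)+2)^2 ≤ 1/((k:ℝ)+1) - 1/((k:ℝ)+2) := by
        rw [div_sub_div _ _ h1.ne' h2.ne', div_le_div_iff₀ (by positivity) (by positivity)]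
        nlinarith
      have hs : S (k+1+1) = S (k+1) + 1/((k:ℝ)+2)^2 := by
        rw [hSsucc (k+1), show ((k+1:ℕ):ℝ) + 1 = (k:ℝ)+2 by push_cast; ring]
      rw [hs, show ((k+1:ℕ):ℝ) + 1 = (k:ℝ)+2 by push_cast; ring]
      linarith
  have hSle : ∀ k, S k ≤ 2 := by
    intro k
    cases k with
    | zero => rw [hS0]; norm_num
    | succ k =>
      have h := hSle' k
      have h1 : (0:ℝ) < 1/((k:ℝ)+1) := by positivity
      linarith
  -- the sequence of points
  obtain ⟨X, hXdef⟩ : ∃ X : ℕ → ℝ, X = fun k => a + (b-a)/20 + (b-a)/10 * S k := ⟨_, rfl⟩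
  have hXval : ∀ k, X k = a + (b-a)/20 + (b-a)/10 * S k := fun k => by rw [hXdef]
  have hXsucc : ∀ k : ℕ, X (k+1) = X k + (b-a)/10 * (1/((k:ℝ)+1)^2) := by
    intro k; rw [hXval, hXval, hSsucc k]; ring
  have hXlb : ∀ k, a + (b-a)/20 ≤ X k := by
    intro k
    have h1 : 0 ≤ (b-a)/10 * S k := mul_nonneg (by positivity) (hSnn k)
    rw [hXval]; linarith
  have hXub : ∀ k, X k ≤ a + (b-a)/4 := by
    intro k
    have h : (b-a)/10 * S k ≤ (b-a)/10 * 2 :=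
      mul_le_mul_of_nonneg_left (hSle k) (by positivity)
    rw [hXval]; linarith
  have hXmem : ∀ k, X k ∈ Icc a b := by
    intro k
    exact ⟨by linarith [hXlb k], by linarith [hXub k]⟩
  have hL1X : ∀ k, 1 ≤ Real.log (f (X k)) := fun k => hL1 _ (hXmem k)
  -- the radii
  obtain ⟨R, hRdef⟩ : ∃ R : ℕ → ℝ, R = fun k => (b - a) / (20 * (Real.log (f (X k)))^2) :=
    ⟨_, rfl⟩
  have hRval : ∀ k, R k = (b - a) / (20 * (Real.log (f (X k)))^2) := fun k => by rw [hRdef]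
  have hRpos : ∀ k, 0 < R k := by
    intro k
    have h := hL1X k
    rw [hRval]
    exact div_pos hba (by nlinarith)
  have hRle : ∀ k, R k ≤ (b-a)/20 := by
    intro k
    have h := hL1X k
    rw [hRval]
    exact div_le_div_of_nonneg_left hba.le (by norm_num) (by nlinarith)
  have hRle' : ∀ k : ℕ, ∀ c : ℝ, 1 ≤ c → c ≤ Real.log (f (X k)) →
      R k ≤ (b-a)/(20*c^2) := by
    intro k c hc1 hc2
    rw [hRval]
    exact div_le_div_of_nonneg_left hba.le (by positivity) (by nlinarith)
  have hImemL : ∀ k, X k - R k ∈ Icc a b := by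
    intro k
    constructor
    · linarith [hXlb k, hRle k]
    · linarith [(hXmem k).2, (hRpos k).le]
  have hIub : ∀ k, X k + R k ≤ b := by
    intro k
    linarith [hXub k, hRle k]
  have hsub : ∀ k, Ioo (X k - R k) (X k + R k) ⊆ Icc a b := by
    intro k t ht
    exact ⟨le_of_lt (lt_of_le_of_lt (hImemL k).1 ht.1), le_of_lt (lt_of_lt_of_le ht.2 (hIub k))⟩
  have hIco : ∀ k, X k ∈ Ico a ((a+b)/2) := by
    intro k
    exact ⟨(hXmem k).1, by linarith [hXub k]⟩
  -- the key invariant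
  have key : ∀ k : ℕ, ((k:ℝ)+1) ≤ Real.log (f (X k - R k)) := by
    intro k
    induction k with
    | zero => simpa using hL1 _ (hImemL 0)
    | succ k ih =>
      have hLk : ((k:ℝ)+1) ≤ Real.log (f (X k)) :=
        le_trans ih (hLm _ _ (hImemL k) (hXmem k) (by linarith [(hRpos k).le]))
      have hk0 : (0:ℝ) < (k:ℝ)+1 := by positivity
      have hRk : R k ≤ (b-a)/(20*((k:ℝ)+1)^2) := hRle' k _ (by linarith) hLk
      -- apply the contradiction hypothesis at X k with N = f (X k - R k)
      obtain ⟨t, ht, htf⟩ := hcon (X k) (hIco k) (f (X k - R k))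
        (hge _ (hImemL k)) (by rw [← hRval]; exact hsub k)
      rw [← hRval] at ht
      have htIcc : t ∈ Icc a b := hsub k ht
      have hNle : f (X k - R k) ≤ f t := hmono (hImemL k) htIcc ht.1.le
      have hbig : Real.exp 1 * f (X k - R k) < f t := htf hNle
      have hNpos : 0 < f (X k - R k) := hfpos _ (hImemL k)
      have hlog : Real.log (Real.exp 1 * f (X k - R k)) ≤ Real.log (f t) :=
        Real.log_le_log (by positivity) hbig.le
      rw [Real.log_mul (Real.exp_ne_zero 1) hNpos.ne', Real.log_exp] at hlog
      have hLt : ((k:ℝ)+2) ≤ Real.log (f t) := by linarith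
      -- locate X (k+1) - R (k+1) to the right of t
      have hstep := hXsucc k
      have htlt : t < X k + R k := ht.2
      have hhalf : (b-a)/(20*((k:ℝ)+1)^2) + (b-a)/(20*((k:ℝ)+1)^2)
          = (b-a)/10 * (1/((k:ℝ)+1)^2) := by
        field_simp
        ring
      have htleX1 : t ≤ X (k+1) := by nlinarith [hRpos k]
      have hLX1 : ((k:ℝ)+2) ≤ Real.log (f (X (k+1))) :=
        le_trans hLt (hLm _ _ htIcc (hXmem (k+1)) htleX1)
      have hRk1 : R (k+1) ≤ (b-a)/(20*((k:ℝ)+2)^2) := hRle' (k+1) _ (by linarith) hLX1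
      have h22 : (b-a)/(20*((k:ℝ)+2)^2) ≤ (b-a)/(20*((k:ℝ)+1)^2) :=
        div_le_div_of_nonneg_left hba.le (by positivity) (by nlinarith)
      have htle : t ≤ X (k+1) - R (k+1) := by linarith
      have hfin : Real.log (f t) ≤ Real.log (f (X (k+1) - R (k+1))) :=
        hLm _ _ htIcc (hImemL (k+1)) htle
      push_cast
      linarith
  -- contradiction: log f is bounded at a + (b-a)/4
  have hMmem : a + (b-a)/4 ∈ Icc a b := ⟨by linarith, by linarith⟩
  obtain ⟨n, hn⟩ := exists_nat_gt (Real.log (f (a + (b-a)/4)))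
  have h1 := key n
  have h2 : Real.log (f (X n - R n)) ≤ Real.log (f (a + (b-a)/4)) :=
    hLm _ _ (hImemL n) hMmem (by linarith [hXub n, (hRpos n).le])
  linarith
end

section
/- Let p ∈ (0,1) be fixed. For every ε > 0 there exist σ > 0 and k₀ > 0 such that for all integers k > k₀ and all integers l with 0 ≤ l ≤ σ·k/log k, we have ∑_{i=0}^{l-1} C(k,i) · p^{k-i} · (1-p)^i ≤ p^{k(1-ε)}. -/
/-!
Each of the `l` terms is at most `k^l p^(k-l)`, so the sum is at most `l k^l p^(k-l)`.
On the logarithmic scale, with `L = -log p`, it remains to show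
`log l + l log k + l L ≤ ε k L`; since `l log k ≤ σ k` and `log k ≥ 1`, the left side is at most
`σ k (2 + L)`, which is `ε k L` for `σ = ε L / (2 + L)`.
-/

open Real Finset

theorem sum_range_choose_mul_pow_le {p : ℝ} (hp0 : 0 ≤ p) (hp1 : p ≤ 1) {k : ℕ} (hk : 0 < k)
    (l : ℕ) :
    ∑ i ∈ range l, (k.choose i : ℝ) * p ^ (k - i) * (1 - p) ^ i ≤
      l * ((k : ℝ) ^ l * p ^ (k - l)) := by
  have hterm : ∀ i ∈ range l,
      (k.choose i : ℝ) * p ^ (k - i) * (1 - p) ^ i ≤ (k : ℝ) ^ l * p ^ (k - l) := by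
    intro i hi
    have hil : i ≤ l := (mem_range.mp hi).le
    have hchoose : (k.choose i : ℝ) ≤ (k : ℝ) ^ l :=
      calc (k.choose i : ℝ) ≤ (k : ℝ) ^ i := mod_cast Nat.choose_le_pow k i
        _ ≤ (k : ℝ) ^ l := pow_le_pow_right₀ (mod_cast hk) hil
    have hpow : p ^ (k - i) ≤ p ^ (k - l) := pow_le_pow_of_le_one hp0 hp1 (by omega)
    calc (k.choose i : ℝ) * p ^ (k - i) * (1 - p) ^ i
        ≤ (k.choose i : ℝ) * p ^ (k - i) * 1 := by
          gcongr
          exact pow_le_one₀ (by linarith) (by linarith)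
      _ ≤ (k : ℝ) ^ l * p ^ (k - l) := by
          rw [mul_one]
          exact mul_le_mul hchoose hpow (by positivity) (by positivity)
  simpa using sum_le_card_nsmul _ _ _ hterm

theorem mul_pow_mul_pow_sub_le_rpow_of_log_le {p ε : ℝ} (hp : 0 < p) {k l : ℕ} (hl : 0 < l)
    (hlk : l ≤ k)
    (h : log l + l * log k + l * -log p ≤ ε * k * -log p) :
    l * ((k : ℝ) ^ l * p ^ (k - l)) ≤ p ^ ((k : ℝ) * (1 - ε)) := by
  have hkpos : (0 : ℝ) < k := by exact_mod_cast hl.trans_le hlk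
  rw [← log_le_log_iff (by positivity) (rpow_pos_of_pos hp _), log_rpow hp,
    log_mul (by positivity) (by positivity), log_mul (by positivity) (by positivity),
    log_pow, log_pow, Nat.cast_sub hlk]
  linarith

theorem log_add_mul_log_add_mul_le {l k σ ε L : ℝ} (hL : 0 < L) (hσ : σ * (2 + L) = ε * L)
    (hl : 1 ≤ l) (hk : 1 ≤ log k) (hlσ : l * log k ≤ σ * k) :
    log l + l * log k + l * L ≤ ε * k * L := by
  have hlog : log l ≤ σ * k :=
    calc log l ≤ l - 1 := log_le_sub_one_of_pos (by linarith)
      _ ≤ l * log k := by nlinarith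
      _ ≤ σ * k := hlσ
  have hlL : l * L ≤ σ * k * L :=
    calc l * L ≤ l * log k * L := by gcongr; nlinarith
      _ ≤ σ * k * L := by gcongr
  linear_combination hlog + hlσ + hlL + k * hσ

/-- Lower tail estimate for the binomial distribution: for fixed `p ∈ (0,1)` and any `ε > 0`
there are `σ > 0` and `k₀` such that for all `k > k₀` and all `l ≤ σ k / log k`,
`∑_{i=0}^{l-1} C(k,i) p^{k-i} (1-p)^i ≤ p^{k(1-ε)}`. -/
theorem binomial_tail_claim (p : ℝ) (hp : p ∈ Set.Ioo (0:ℝ) 1) (ε : ℝ) (hε : 0 < ε) :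
    ∃ σ : ℝ, 0 < σ ∧ ∃ k₀ : ℕ, 0 < k₀ ∧
      ∀ k : ℕ, k₀ < k → ∀ l : ℕ, (l : ℝ) ≤ σ * k / Real.log k →
        ∑ i ∈ Finset.range l, (k.choose i : ℝ) * p ^ (k - i) * (1 - p) ^ i ≤
          p ^ ((k : ℝ) * (1 - ε)) := by
  obtain ⟨hp0, hp1⟩ := hp
  have hL : 0 < -log p := neg_pos.mpr (log_neg hp0 hp1)
  set σ := ε * -log p / (2 + -log p) with hσ
  have hσpos : 0 < σ := by positivity
  refine ⟨σ, hσpos, ⌈exp (σ + 1)⌉₊ + 1, by positivity, fun k hk l hl => ?_⟩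
  have hkpos : (0 : ℝ) < k := by exact_mod_cast (by omega : 0 < k)
  have hlogk : σ + 1 ≤ log k :=
    (le_log_iff_exp_le hkpos).mpr ((Nat.le_ceil _).trans (by exact_mod_cast (by omega)))
  rcases Nat.eq_zero_or_pos l with rfl | hl0
  · simpa using rpow_nonneg hp0.le _
  have hlσ : (l : ℝ) * log k ≤ σ * k := (le_div_iff₀ (by linarith)).mp hl
  have hlk : l ≤ k := by
    have hσk : σ * k ≤ log k * k := by gcongr; linarith
    exact_mod_cast le_of_mul_le_mul_right (by linarith : l * log k ≤ k * log k) (by linarith)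
  refine (sum_range_choose_mul_pow_le hp0.le hp1.le (by omega) l).trans
    (mul_pow_mul_pow_sub_le_rpow_of_log_le hp0 hl0 hlk ?_)
  exact log_add_mul_log_add_mul_le hL (by rw [hσ]; field_simp) (mod_cast hl0) (by linarith) hlσ
end

section
/- Let A ≥ 1 be an integer and c > 0, N₀ > 0. Let 𝔸 be the set of finite sequences over {1,…,A^n} (indexing nested subcubes), and let N : 𝔸 → ℝ≥0 satisfy: (i) N is monotone with respect to extension of sequences (if s extends t then N(s) ≤ N(t)); (ii) for any sequence s, the number of j ∈ {1,…,A^n} with N(s⌢j) ≥ max(N(s)/(1+c), N₀) is at most A^{n-1}/2. Then for any integers 0 ≤ l ≤ k with k ≥ 1, the number of sequences (j₁,…,j_k) ∈ {1,…,A^n}^k with N(j₁,…,j_k) ≤ max(N(∅)/(1+c)^l, N₀) is at least A^{nk} · ∑_{i=l}^{k} C(k,i) (1/(2A))^{k-i} (1 - 1/(2A))^i. -/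
open Finset Classical

/-!
Call the step from `s` to `s ++ [j]` a descent when `N (s ++ [j]) < max (N s / (1 + c)) N₀`.
Along a path `N` decays by a factor `1 + c` at every descent until it falls below `N₀`, so a path
with at least `l` descents ends below `max (N ∅ / (1 + c) ^ l) N₀`. At every node at most a
fraction `p = 1 / (2A)` of the `A ^ n` children are not descents; splitting paths by their first
letter, the proportion of paths of length `k` with at least `l` descents therefore satisfies the
Pascal recursion of a binomial tail as an inequality, and dominates that tail.
-/

/-- The probability that a binomial variable with `k` trials and success probability `1 - p`
is at least `l`. -/
noncomputable def binomialTail (p : ℝ) (k l : ℕ) : ℝ :=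
  ∑ i ∈ Icc l k, (k.choose i : ℝ) * p ^ (k - i) * (1 - p) ^ i

namespace binomialTail

theorem zero_right (p : ℝ) (k : ℕ) : binomialTail p k 0 = 1 := by
  have h := add_pow (1 - p) p k
  rw [sub_add_cancel, one_pow, Nat.range_succ_eq_Icc_zero] at h
  exact (sum_congr rfl fun i _ => by ring).trans h.symm

theorem zero_succ (p : ℝ) (l : ℕ) : binomialTail p 0 (l + 1) = 0 := by
  simp [binomialTail]

theorem succ_le {p : ℝ} (hp₀ : 0 ≤ p) (hp₁ : p ≤ 1) (k l : ℕ) :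
    binomialTail p k (l + 1) ≤ binomialTail p k l := by
  have : 0 ≤ 1 - p := sub_nonneg.mpr hp₁
  exact sum_le_sum_of_subset_of_nonneg (Icc_subset_Icc_left l.le_succ) fun i _ _ => by positivity

theorem succ_succ (p : ℝ) (k l : ℕ) :
    binomialTail p (k + 1) (l + 1) =
      p * binomialTail p k (l + 1) + (1 - p) * binomialTail p k l := by
  set f : ℕ → ℕ → ℝ := fun k i => (k.choose i : ℝ) * p ^ (k - i) * (1 - p) ^ i
  have pascal (i : ℕ) : f (k + 1) (i + 1) = p * f k (i + 1) + (1 - p) * f k i := by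
    simp only [f, Nat.choose_succ_succ', Nat.cast_add]
    rcases lt_or_ge i k with hik | hik
    · rw [show k + 1 - (i + 1) = k - (i + 1) + 1 by omega, show k - i = k - (i + 1) + 1 by omega]
      ring
    · rw [Nat.choose_eq_zero_of_lt (Nat.lt_succ_of_le hik), Nat.sub_eq_zero_of_le hik,
        show k + 1 - (i + 1) = 0 by omega]
      ring
  have shift (g : ℕ → ℝ) : ∑ i ∈ Icc (l + 1) (k + 1), g i = ∑ i ∈ Icc l k, g (i + 1) := by
    rw [← map_add_right_Icc l k 1, sum_map]
    rfl
  have top : ∑ i ∈ Icc (l + 1) (k + 1), f k i = ∑ i ∈ Icc (l + 1) k, f k i := by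
    refine (sum_subset (Icc_subset_Icc_right k.le_succ) fun i hi hik => ?_).symm
    have : k < i := by simp_all
    simp only [f, Nat.choose_eq_zero_of_lt this, Nat.cast_zero, zero_mul]
  simp only [binomialTail]
  rw [shift, sum_congr rfl fun i _ => pascal i, sum_add_distrib, ← mul_sum, ← mul_sum, ← shift,
    top]

end binomialTail

section GoodSteps

variable {β : Type*}

/-- The number of indices `i` with `good (s.take i) s[i]`. -/
noncomputable def goodSteps (good : List β → β → Prop) : List β → ℕ
  | [] => 0
  | x :: s => (if good [] x then 1 else 0) + goodSteps (fun t => good (x :: t)) s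

theorem card_filter_fin_succ [Fintype β] {k : ℕ} (P : (Fin (k + 1) → β) → Prop) [DecidablePred P] :
    #{j | P j} = ∑ x, #{g : Fin k → β | P (Fin.cons x g)} := by
  simp only [card_filter]
  rw [← (Fin.consEquiv fun _ => β).sum_comp, Fintype.sum_prod_type]
  rfl

theorem card_mul_le_sum_ite [Fintype β] (P : β → Prop) {p a b : ℝ} (hab : a ≤ b)
    (hbad : (#{x | ¬P x} : ℝ) ≤ Fintype.card β * p) :
    Fintype.card β * (p * a + (1 - p) * b) ≤ ∑ x, if P x then b else a := by
  have hgood : (#{x | P x} : ℝ) = Fintype.card β - #{x | ¬P x} := by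
    rw [eq_sub_iff_add_eq]
    exact_mod_cast card_filter_add_card_filter_not (s := univ) P
  rw [sum_ite, sum_const, sum_const, nsmul_eq_mul, nsmul_eq_mul, hgood]
  linarith [mul_nonneg (sub_nonneg.2 hbad) (sub_nonneg.2 hab)]

theorem pow_mul_binomialTail_le_card_goodSteps [Fintype β] {p : ℝ} (hp₀ : 0 ≤ p) (hp₁ : p ≤ 1)
    (good : List β → β → Prop) (hbad : ∀ s, (#{j | ¬good s j} : ℝ) ≤ Fintype.card β * p)
    (k l : ℕ) :
    (Fintype.card β : ℝ) ^ k * binomialTail p k l ≤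
      #{j : Fin k → β | l ≤ goodSteps good (List.ofFn j)} := by
  set M : ℝ := (Fintype.card β : ℝ)
  induction k generalizing good l with
  | zero =>
    rcases l with _ | l
    · simp [binomialTail.zero_right]
    · simp [binomialTail.zero_succ]
  | succ k ih =>
    rcases l with _ | l
    · simp [M, binomialTail.zero_right]
    have hsubtree (x : β) :
        M ^ k * (if good [] x then binomialTail p k l else binomialTail p k (l + 1)) ≤
          #{g : Fin k → β | l + 1 ≤ goodSteps good (List.ofFn (Fin.cons x g))} := by
      simp only [List.ofFn_cons, goodSteps]
      split_ifs
      · simpa [add_comm 1] using ih _ l (fun s => hbad (x :: s))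
      · simpa using ih _ (l + 1) (fun s => hbad (x :: s))
    calc M ^ (k + 1) * binomialTail p (k + 1) (l + 1)
        = M ^ k * (M * (p * binomialTail p k (l + 1) + (1 - p) * binomialTail p k l)) := by
          rw [binomialTail.succ_succ, pow_succ, mul_assoc]
      _ ≤ M ^ k * ∑ x, if good [] x then binomialTail p k l else binomialTail p k (l + 1) := by
          gcongr
          exact card_mul_le_sum_ite _ (binomialTail.succ_le hp₀ hp₁ k l) (hbad [])
      _ ≤ _ := by
          rw [card_filter_fin_succ, mul_sum]
          push_cast
          exact sum_le_sum fun x _ => hsubtree x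

end GoodSteps

section Descent

variable {β : Type*}

def IsDescent (r N₀ : ℝ) (N : List β → ℝ) (s : List β) (j : β) : Prop :=
  N (s ++ [j]) < max (N s / r) N₀

theorem le_max_div_pow_goodSteps {r N₀ : ℝ} (hr : 1 ≤ r) {N : List β → ℝ}
    (hpos : ∀ t, 0 ≤ N t) (hstep : ∀ t j, N (t ++ [j]) ≤ N t) (s : List β) :
    N s ≤ max (N [] / r ^ goodSteps (IsDescent r N₀ N) s) N₀ := by
  induction s generalizing N with
  | nil => simp [goodSteps]
  | cons x t ih =>
    set g := goodSteps (IsDescent r N₀ fun u => N (x :: u)) t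
    have hx : N [x] / r ^ g ≤ N [x] := div_le_self (hpos _) (one_le_pow₀ hr)
    refine (ih (fun u => hpos (x :: u)) (fun u j => hstep (x :: u) j)).trans
      (max_le ?_ (le_max_right _ _))
    change N [x] / r ^ g ≤ max (N [] / r ^ ((if IsDescent r N₀ N [] x then 1 else 0) + g)) N₀
    split_ifs with hdesc
    · rcases lt_max_iff.1 hdesc with hlt | hlt
      · refine le_max_of_le_left ?_
        calc N [x] / r ^ g ≤ N [] / r / r ^ g := by gcongr; exact hlt.le
          _ = N [] / r ^ (1 + g) := by rw [div_div, pow_add, pow_one]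
      · exact le_max_of_le_right (hx.trans hlt.le)
    · refine le_max_of_le_left ?_
      rw [zero_add]
      gcongr
      exact hstep [] x

theorem le_max_div_pow_of_le_goodSteps {r N₀ : ℝ} (hr : 1 ≤ r) {N : List β → ℝ}
    (hpos : ∀ t, 0 ≤ N t) (hstep : ∀ t j, N (t ++ [j]) ≤ N t) {s : List β} {l : ℕ}
    (hl : l ≤ goodSteps (IsDescent r N₀ N) s) :
    N s ≤ max (N [] / r ^ l) N₀ := by
  refine (le_max_div_pow_goodSteps hr hpos hstep s).trans (max_le_max ?_ le_rfl)
  gcongr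
  exact hpos []

end Descent

theorem iteration_lemma_general (n A : ℕ) (hn : 1 ≤ n) (hA : 1 ≤ A) (c N₀ : ℝ) (hc : 0 < c)
    (N : List (Fin (A ^ n)) → ℝ) (hNpos : ∀ s, 0 ≤ N s)
    (hmono : ∀ s t : List (Fin (A ^ n)), t <+: s → N s ≤ N t)
    (hhalf : ∀ s : List (Fin (A ^ n)),
      ((Finset.univ.filter fun j : Fin (A ^ n) =>
        max (N s / (1 + c)) N₀ ≤ N (s ++ [j])).card : ℝ) ≤ (A : ℝ) ^ (n - 1) / 2)
    (l k : ℕ) :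
    (A : ℝ) ^ (n * k) *
        ∑ i ∈ Finset.Icc l k, (k.choose i : ℝ) * (1 / (2 * A)) ^ (k - i) *
          (1 - 1 / (2 * A)) ^ i ≤
      ((Finset.univ.filter fun j : Fin k → Fin (A ^ n) =>
        N (List.ofFn j) ≤ max (N [] / (1 + c) ^ l) N₀).card : ℝ) := by
  have hA₁ : (1 : ℝ) ≤ A := by exact_mod_cast hA
  set p : ℝ := 1 / (2 * A)
  have hp₀ : 0 ≤ p := by positivity
  have hp₁ : p ≤ 1 := by
    rw [div_le_one (by positivity)]
    linarith
  have hcard : (Fintype.card (Fin (A ^ n)) : ℝ) = A ^ n := by simp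
  have hbad (s) : (#{j | ¬IsDescent (1 + c) N₀ N s j} : ℝ) ≤ Fintype.card (Fin (A ^ n)) * p := by
    have hpow : (A : ℝ) ^ n = A * A ^ (n - 1) := by rw [← pow_succ', Nat.sub_add_cancel hn]
    convert hhalf s using 3
    · simp only [IsDescent, not_lt]
    · rw [hcard, hpow]
      simp only [p]
      field_simp
  have hstep (t : List (Fin (A ^ n))) (j) : N (t ++ [j]) ≤ N t :=
    hmono _ _ (List.prefix_append t [j])
  calc (A : ℝ) ^ (n * k) * binomialTail p k l
      = (Fintype.card (Fin (A ^ n)) : ℝ) ^ k * binomialTail p k l := by rw [hcard, pow_mul]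
    _ ≤ #{j : Fin k → Fin (A ^ n) | l ≤ goodSteps (IsDescent (1 + c) N₀ N) (List.ofFn j)} :=
      pow_mul_binomialTail_le_card_goodSteps hp₀ hp₁ _ hbad k l
    _ ≤ _ := by
      gcongr with j
      intro hj
      exact le_max_div_pow_of_le_goodSteps (by linarith) hNpos hstep hj

/-- Abstract iteration lemma (Lemma on cubes with big doubling index).
Sequences over `Fin (A^n)` index the nested subcubes obtained by repeated partition of a cube
into `A^n` equal subcubes; `N` abstracts the doubling index.  If `N` is monotone under
extension of sequences and for every node at most `A^{n-1}/2` of its `A^n` children `j`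
satisfy `N(s⌢j) ≥ max(N(s)/(1+c), N₀)`, then for `0 ≤ l ≤ k` the number of sequences
`(j₁,…,j_k)` with `N(j₁,…,j_k) ≤ max(N(∅)/(1+c)^l, N₀)` is at least
`A^{nk} ∑_{i=l}^k C(k,i) (1/(2A))^{k-i} (1-1/(2A))^i`. -/
theorem iteration_lemma (n A : ℕ) (hn : 1 ≤ n) (hA : 1 ≤ A) (c N₀ : ℝ) (hc : 0 < c)
    (hN₀ : 0 < N₀) (N : List (Fin (A ^ n)) → ℝ) (hNpos : ∀ s, 0 ≤ N s)
    (hmono : ∀ s t : List (Fin (A ^ n)), t <+: s → N s ≤ N t)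
    (hhalf : ∀ s : List (Fin (A ^ n)),
      ((Finset.univ.filter fun j : Fin (A ^ n) =>
        max (N s / (1 + c)) N₀ ≤ N (s ++ [j])).card : ℝ) ≤ (A : ℝ) ^ (n - 1) / 2)
    (l k : ℕ) (hlk : l ≤ k) (hk : 1 ≤ k) :
    (A : ℝ) ^ (n * k) *
        ∑ i ∈ Finset.Icc l k, (k.choose i : ℝ) * (1 / (2 * A)) ^ (k - i) *
          (1 - 1 / (2 * A)) ^ i ≤
      ((Finset.univ.filter fun j : Fin k → Fin (A ^ n) =>
        N (List.ofFn j) ≤ max (N [] / (1 + c) ^ l) N₀).card : ℝ) :=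
  iteration_lemma_general n A hn hA c N₀ hc N hNpos hmono hhalf l k
end

section
/- Fix an integer A ≥ 2 and p = 1/(2A). For every ε > 0 with (1/(2A))^{1-ε} = (1/A)^{1+c₂} for some c₂ > 0, and for σ, k₀ as in the binomial tail claim, the number of sequences in {1,…,A^n}^k (k > k₀) along which an abstract monotone index N (satisfying hypotheses (i),(ii) of the iteration lemma) stays above max(N(∅)/(1+c)^{σk/log k}, N₀) is at most A^{nk} · (1/(2A))^{k(1-ε)} = A^{k(n-1-c₂)}. -/
open Finset Real Classical

set_option maxRecDepth 10000 in
private lemma count_aux {X : Type} [Fintype X] (B : ℝ) (hB : 0 ≤ B)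
    (P : List X → X → Prop)
    (hP : ∀ s, ((Finset.univ.filter fun x => P s x).card : ℝ) ≤ B) :
    ∀ (k : ℕ) (f : Fin k → Bool) (s : List X),
      ((Finset.univ.filter fun j : Fin k → X =>
        ∀ i : Fin k, f i = true → P (s ++ (List.ofFn j).take i.val) (j i)).card : ℝ) ≤
      (Fintype.card X : ℝ) ^ ((Finset.univ.filter fun i => f i = false).card) *
        B ^ ((Finset.univ.filter fun i => f i = true).card) := by
  intro k
  induction k with
  | zero =>
    intro f s
    have h1 : ((Finset.univ.filter fun j : Fin 0 → X =>
        ∀ i : Fin 0, f i = true → P (s ++ (List.ofFn j).take i.val) (j i)).card) ≤ 1 := by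
      refine le_trans (Finset.card_filter_le _ _) ?_
      simp
    have h2 : ((Finset.univ.filter fun i : Fin 0 => f i = false).card) = 0 := by simp
    have h3 : ((Finset.univ.filter fun i : Fin 0 => f i = true).card) = 0 := by simp
    rw [h2, h3]
    simpa using by exact_mod_cast h1
  | succ k ih =>
    intro f s
    set Pfull : (Fin (k+1) → X) → Prop :=
      fun j => ∀ i : Fin (k+1), f i = true → P (s ++ (List.ofFn j).take i.val) (j i) with hPfull
    have hsplit : ((Finset.univ.filter Pfull).card)
        = ∑ x : X, (Finset.univ.filter fun r : Fin k → X => Pfull (Fin.cons x r)).card := by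
      rw [Finset.card_filter]
      rw [← Equiv.sum_comp (Fin.consEquiv (fun _ => X)) (fun j => if Pfull j then 1 else 0)]
      rw [Fintype.sum_prod_type]
      refine Finset.sum_congr rfl fun x _ => ?_
      rw [Finset.card_filter]
      rfl
    have hcons : ∀ (x : X) (r : Fin k → X), Pfull (Fin.cons x r) ↔
        ((f 0 = true → P s x) ∧
          ∀ i : Fin k, f i.succ = true → P ((s ++ [x]) ++ (List.ofFn r).take i.val) (r i)) := by
      intro x r
      simp only [hPfull]
      rw [Fin.forall_fin_succ]
      simp only [Fin.cons_zero, Fin.cons_succ, Fin.val_zero, Fin.val_succ, List.take_zero,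
        List.append_nil, List.ofFn_succ, List.take_succ_cons, ← List.append_cons]
    set C : ℝ := (Fintype.card X : ℝ) ^ ((Finset.univ.filter fun i : Fin k => f i.succ = false).card) *
        B ^ ((Finset.univ.filter fun i : Fin k => f i.succ = true).card) with hCdef
    have hC : 0 ≤ C := by
      apply mul_nonneg <;> apply pow_nonneg
      · exact_mod_cast Nat.zero_le _
      · exact hB
    have hbound : ∀ x : X, ((Finset.univ.filter fun r : Fin k → X =>
        Pfull (Fin.cons x r)).card : ℝ) ≤ C := by
      intro x
      refine le_trans ?_ (ih (fun i => f i.succ) (s ++ [x]))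
      have hsub : (Finset.univ.filter fun r : Fin k → X => Pfull (Fin.cons x r)) ⊆
          (Finset.univ.filter fun r : Fin k → X =>
            ∀ i : Fin k, f i.succ = true → P ((s ++ [x]) ++ (List.ofFn r).take i.val) (r i)) := by
        intro r hr
        simp only [Finset.mem_filter] at hr ⊢
        exact ⟨hr.1, ((hcons x r).mp hr.2).2⟩
      exact_mod_cast Nat.cast_le.mpr (Finset.card_le_card hsub)
    have hempty : ∀ x : X, f 0 = true → ¬ P s x →
        (Finset.univ.filter fun r : Fin k → X => Pfull (Fin.cons x r)) = ∅ := by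
      intro x h0 hpx
      rw [Finset.filter_eq_empty_iff]
      intro r _ hr
      exact hpx (((hcons x r).mp hr).1 h0)
    rw [hsplit]
    push_cast
    by_cases h0 : f 0 = true
    · have ha : (Finset.univ.filter fun i : Fin (k+1) => f i = false).card
          = (Finset.univ.filter fun i : Fin k => f i.succ = false).card := by
        rw [Finset.card_filter, Finset.card_filter, Fin.sum_univ_succ]
        simp [h0]
      have hb : (Finset.univ.filter fun i : Fin (k+1) => f i = true).card
          = (Finset.univ.filter fun i : Fin k => f i.succ = true).card + 1 := by
        rw [Finset.card_filter, Finset.card_filter, Fin.sum_univ_succ]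
        simp [h0, add_comm]
      rw [ha, hb]
      calc (∑ x : X, ((Finset.univ.filter fun r : Fin k → X => Pfull (Fin.cons x r)).card : ℝ))
          ≤ ∑ x : X, (if P s x then C else 0) := by
            refine Finset.sum_le_sum fun x _ => ?_
            by_cases hpx : P s x
            · simpa [hpx] using hbound x
            · simp [hpx, hempty x h0 hpx]
        _ = ((Finset.univ.filter fun x : X => P s x).card : ℝ) * C := by
            rw [Finset.sum_ite, Finset.sum_const, Finset.sum_const]
            simp [mul_comm]
        _ ≤ B * C := mul_le_mul_of_nonneg_right (hP s) hC
        _ = (Fintype.card X : ℝ) ^ ((Finset.univ.filter fun i : Fin k => f i.succ = false).card)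
              * B ^ ((Finset.univ.filter fun i : Fin k => f i.succ = true).card + 1) := by
            rw [hCdef, pow_succ]; ring
    · have ha : (Finset.univ.filter fun i : Fin (k+1) => f i = false).card
          = (Finset.univ.filter fun i : Fin k => f i.succ = false).card + 1 := by
        rw [Finset.card_filter, Finset.card_filter, Fin.sum_univ_succ]
        simp [h0, add_comm]
      have hb : (Finset.univ.filter fun i : Fin (k+1) => f i = true).card
          = (Finset.univ.filter fun i : Fin k => f i.succ = true).card := by
        rw [Finset.card_filter, Finset.card_filter, Fin.sum_univ_succ]
        simp [h0]
      rw [ha, hb]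
      calc (∑ x : X, ((Finset.univ.filter fun r : Fin k → X => Pfull (Fin.cons x r)).card : ℝ))
          ≤ ∑ _x : X, C := Finset.sum_le_sum fun x _ => hbound x
        _ = (Fintype.card X : ℝ) * C := by
            rw [Finset.sum_const]; simp [mul_comm]
        _ = (Fintype.card X : ℝ) ^ ((Finset.univ.filter fun i : Fin k => f i.succ = false).card + 1)
              * B ^ ((Finset.univ.filter fun i : Fin k => f i.succ = true).card) := by
            rw [hCdef, pow_succ]; ring

set_option maxRecDepth 10000 in
private lemma descent_aux {X : Type} (c N₀ : ℝ) (hc : 0 < c) (hN₀ : 0 < N₀)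
    (N : List X → ℝ) (hmono : ∀ s t : List X, t <+: s → N s ≤ N t)
    (k : ℕ) (j : Fin k → X) (hfin : N₀ ≤ N (List.ofFn j)) :
    N (List.ofFn j) * (1 + c) ^ ((Finset.univ.filter fun i : Fin k =>
      ¬ max (N ((List.ofFn j).take i.val) / (1 + c)) N₀ ≤
        N ((List.ofFn j).take i.val ++ [j i])).card) ≤ N [] := by
  have hc1 : (0:ℝ) < 1 + c := by linarith
  set Gd : Fin k → Prop := fun i =>
    ¬ max (N ((List.ofFn j).take i.val) / (1 + c)) N₀ ≤
        N ((List.ofFn j).take i.val ++ [j i]) with hGd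
  have hpre : ∀ i : Fin k, (List.ofFn j).take (i.val + 1)
      = (List.ofFn j).take i.val ++ [j i] := by
    intro i
    rw [List.take_succ, List.getElem?_ofFn]
    simp [List.ofFnNthVal, i.isLt]
  have hprefpos : ∀ t : ℕ, N₀ ≤ N ((List.ofFn j).take t) :=
    fun t => le_trans hfin (hmono _ _ (List.take_prefix _ _))
  have key : ∀ t : ℕ, t ≤ k →
      N ((List.ofFn j).take t) * (1 + c) ^
        ((Finset.univ.filter fun i : Fin k => i.val < t ∧ Gd i).card) ≤ N [] := by
    intro t
    induction t with
    | zero =>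
      intro _
      have h0 : (Finset.univ.filter fun i : Fin k => i.val < 0 ∧ Gd i) = ∅ := by
        rw [Finset.filter_eq_empty_iff]; intro i _ h; omega
      simp [h0]
    | succ t iht =>
      intro ht1
      have ht : t < k := ht1
      have ihc := iht (le_of_lt ht)
      set i₀ : Fin k := ⟨t, ht⟩ with hi₀
      have hpre' : (List.ofFn j).take (t+1) = (List.ofFn j).take t ++ [j i₀] := hpre i₀
      have hpow : (0:ℝ) ≤ (1 + c) ^ ((Finset.univ.filter fun i : Fin k => i.val < t ∧ Gd i).card) :=
        pow_nonneg hc1.le _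
      by_cases hG : Gd i₀
      · -- good step: strict drop
        have hset : (Finset.univ.filter fun i : Fin k => i.val < t + 1 ∧ Gd i)
            = insert i₀ (Finset.univ.filter fun i : Fin k => i.val < t ∧ Gd i) := by
          ext i
          simp only [Finset.mem_filter, Finset.mem_univ, true_and, Finset.mem_insert]
          constructor
          · rintro ⟨hlt, hGi⟩
            rcases Nat.lt_succ_iff_lt_or_eq.mp hlt with h | h
            · exact Or.inr ⟨h, hGi⟩
            · exact Or.inl (Fin.ext h)
          · rintro (rfl | ⟨hlt, hGi⟩)
            · exact ⟨Nat.lt_succ_self t, hG⟩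
            · exact ⟨Nat.lt_succ_of_lt hlt, hGi⟩
        have hnotmem : i₀ ∉ (Finset.univ.filter fun i : Fin k => i.val < t ∧ Gd i) := by
          simp [hi₀]
        have hlt' : N ((List.ofFn j).take (t+1)) < N ((List.ofFn j).take t) / (1 + c) := by
          have h1 : N ((List.ofFn j).take t ++ [j i₀])
              < max (N ((List.ofFn j).take t) / (1 + c)) N₀ := not_le.mp hG
          rw [← hpre'] at h1
          rcases lt_max_iff.mp h1 with h | h
          · exact h
          · exact absurd (hprefpos (t+1)) (not_le.mpr h)
        have hmul : N ((List.ofFn j).take (t+1)) * (1 + c) ≤ N ((List.ofFn j).take t) :=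
          ((lt_div_iff₀ hc1).mp hlt').le
        rw [hset, Finset.card_insert_of_notMem hnotmem, pow_succ]
        calc N ((List.ofFn j).take (t+1)) * ((1+c) ^ ((Finset.univ.filter fun i : Fin k => i.val < t ∧ Gd i).card) * (1+c))
            = (N ((List.ofFn j).take (t+1)) * (1+c)) * (1+c) ^ ((Finset.univ.filter fun i : Fin k => i.val < t ∧ Gd i).card) := by ring
          _ ≤ N ((List.ofFn j).take t) * (1+c) ^ ((Finset.univ.filter fun i : Fin k => i.val < t ∧ Gd i).card) :=
              mul_le_mul_of_nonneg_right hmul hpow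
          _ ≤ N [] := ihc
      · -- bad step: index does not increase
        have hset : (Finset.univ.filter fun i : Fin k => i.val < t + 1 ∧ Gd i)
            = (Finset.univ.filter fun i : Fin k => i.val < t ∧ Gd i) := by
          ext i
          simp only [Finset.mem_filter, Finset.mem_univ, true_and]
          constructor
          · rintro ⟨hlt, hGi⟩
            rcases Nat.lt_succ_iff_lt_or_eq.mp hlt with h | h
            · exact ⟨h, hGi⟩
            · exact absurd hGi (by rw [show i = i₀ from Fin.ext h]; exact hG)
          · rintro ⟨hlt, hGi⟩
            exact ⟨Nat.lt_succ_of_lt hlt, hGi⟩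
        have hmono' : N ((List.ofFn j).take (t+1)) ≤ N ((List.ofFn j).take t) := by
          apply hmono
          rw [hpre']
          exact List.prefix_append _ _
        rw [hset]
        exact le_trans (mul_le_mul_of_nonneg_right hmono' hpow) ihc
  have hfinal := key k le_rfl
  have htake : (List.ofFn j).take k = List.ofFn j :=
    List.take_of_length_le (by simp)
  have hfilter : (Finset.univ.filter fun i : Fin k => i.val < k ∧ Gd i)
      = (Finset.univ.filter fun i : Fin k => Gd i) := by
    apply Finset.filter_congr
    intro i _
    simp [i.isLt]
  rw [htake, hfilter] at hfinal
  exact hfinal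

set_option maxRecDepth 10000 in
set_option maxHeartbeats 3200000 in
/-- Iterated version with the binomial tail bound (inequality (eq:eps)): in the setting of the
abstract iteration lemma, with `p = 1/(2A)` and `ε > 0` chosen so that
`(1/(2A))^{1-ε} = (1/A)^{1+c₂}` with `c₂ > 0`, there are `σ > 0` and `k₀` such that for `k > k₀`
the number of sequences in `{1,…,A^n}^k` along which the index stays
`≥ max(N(∅)/(1+c)^{σk/log k}, N₀)` is at most `A^{nk} (1/(2A))^{k(1-ε)} = A^{k(n-1-c₂)}`. -/
theorem iterated_bad_cube_count (n A : ℕ) (hn : 1 ≤ n) (hA : 2 ≤ A) (c N₀ : ℝ) (hc : 0 < c)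
    (hN₀ : 0 < N₀) (N : List (Fin (A ^ n)) → ℝ) (hNpos : ∀ s, 0 ≤ N s)
    (hmono : ∀ s t : List (Fin (A ^ n)), t <+: s → N s ≤ N t)
    (hhalf : ∀ s : List (Fin (A ^ n)),
      ((Finset.univ.filter fun j : Fin (A ^ n) =>
        max (N s / (1 + c)) N₀ ≤ N (s ++ [j])).card : ℝ) ≤ (A : ℝ) ^ (n - 1) / 2)
    (ε c₂ : ℝ) (hε : 0 < ε) (hc₂ : 0 < c₂)
    (hεc₂ : (1 / (2 * (A:ℝ))) ^ (1 - ε) = (1 / (A:ℝ)) ^ (1 + c₂)) :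
    ∃ σ : ℝ, 0 < σ ∧ ∃ k₀ : ℕ,
      ∀ k : ℕ, k₀ < k →
        ((Finset.univ.filter fun j : Fin k → Fin (A ^ n) =>
            max (N [] / (1 + c) ^ (σ * k / Real.log k)) N₀ ≤ N (List.ofFn j)).card : ℝ) ≤
          (A : ℝ) ^ (n * k) * (1 / (2 * (A:ℝ))) ^ ((k : ℝ) * (1 - ε)) ∧
        (A : ℝ) ^ (n * k) * (1 / (2 * (A:ℝ))) ^ ((k : ℝ) * (1 - ε)) =
          (A : ℝ) ^ ((k : ℝ) * (n - 1 - c₂)) := by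
  -- basic positivity facts
  have hA1 : (1:ℝ) < (A:ℝ) := by exact_mod_cast hA.trans_lt' one_lt_two
  have hA0 : (0:ℝ) < (A:ℝ) := by linarith
  have hT1 : (1:ℝ) < 2 * (A:ℝ) := by linarith
  have hT0 : (0:ℝ) < 2 * (A:ℝ) := by linarith
  set L : ℝ := Real.log (2 * (A:ℝ)) with hLdef
  have hL1 : 1 < L := by
    have h4 : (4:ℝ) ≤ 2 * A := by
      have : (2:ℝ) ≤ (A:ℝ) := by exact_mod_cast hA
      linarith
    have hlog4 : Real.log 4 ≤ L := Real.log_le_log (by norm_num) h4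
    have h42 : Real.log 4 = 2 * Real.log 2 := by
      rw [show (4:ℝ) = 2 ^ 2 by norm_num, Real.log_pow]; push_cast; ring
    have := Real.log_two_gt_d9
    nlinarith
  have hL0 : 0 < L := by linarith
  -- ε < 1
  have h1ε : 0 < 1 - ε := by
    by_contra h
    push_neg at h
    have hb : (0:ℝ) < 1 / (2 * A) := by positivity
    have hb1 : 1 / (2 * (A:ℝ)) ≤ 1 := by rw [div_le_one hT0]; linarith
    have h1 := Real.one_le_rpow_of_pos_of_le_one_of_nonpos hb hb1 h
    rw [hεc₂] at h1
    have h2 : (1 / (A:ℝ)) ^ (1 + c₂) < 1 :=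
      Real.rpow_lt_one (by positivity) (by rw [div_lt_one hA0]; linarith) (by linarith)
    linarith
  have hε1 : ε < 1 := by linarith
  -- choose σ
  refine ⟨ε * L / 4, by positivity, ?_⟩
  -- eventual conditions on k
  have e1 : ∀ᶠ (k : ℕ) in Filter.atTop, 3 ≤ k := Filter.eventually_ge_atTop 3
  have e2 : ∀ᶠ (k : ℕ) in Filter.atTop, L ≤ Real.log k := by
    have h := Real.tendsto_log_atTop.eventually_ge_atTop L
    exact (tendsto_natCast_atTop_atTop (R := ℝ)).eventually h
  have e3 : ∀ᶠ (k : ℕ) in Filter.atTop, Real.log k ≤ (ε * L / 4) * k := by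
    have h := Real.isLittleO_log_id_atTop.def (by positivity : (0:ℝ) < ε * L / 4)
    have h2 := (tendsto_natCast_atTop_atTop (R := ℝ)).eventually h
    filter_upwards [h2] with k hk
    calc Real.log k ≤ ‖Real.log k‖ := le_abs_self _
      _ ≤ (ε * L / 4) * ‖(k:ℝ)‖ := hk
      _ = (ε * L / 4) * k := by rw [Real.norm_natCast]
  have e4 : ∀ᶠ (k : ℕ) in Filter.atTop, Real.log (ε * L / 4 + 1) ≤ (ε * L / 4) * k := by
    have hpos : (0:ℝ) < ε * L / 4 := by positivity
    filter_upwards [Filter.eventually_ge_atTop ⌈Real.log (ε * L / 4 + 1) / (ε * L / 4)⌉₊] with k hk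
    have h1 : Real.log (ε * L / 4 + 1) / (ε * L / 4) ≤ (k:ℝ) :=
      le_trans (Nat.le_ceil _) (by exact_mod_cast hk)
    calc Real.log (ε * L / 4 + 1) = Real.log (ε * L / 4 + 1) / (ε * L / 4) * (ε * L / 4) := by
          field_simp
      _ ≤ (k:ℝ) * (ε * L / 4) := mul_le_mul_of_nonneg_right h1 hpos.le
      _ = (ε * L / 4) * k := mul_comm _ _
  obtain ⟨k₀, hk₀⟩ := Filter.eventually_atTop.mp ((e1.and e2).and (e3.and e4))
  refine ⟨k₀, ?_⟩
  intro k hk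
  obtain ⟨⟨hk3, hlogL⟩, hloglin, hconst⟩ := hk₀ k hk.le
  constructor
  · -- main counting inequality
    set σ : ℝ := ε * L / 4 with hσdef
    have hσ0 : 0 < σ := by positivity
    have hk1 : (1:ℝ) ≤ (k:ℝ) := by exact_mod_cast le_trans (by norm_num) hk3
    have hk0 : (0:ℝ) < (k:ℝ) := by linarith
    have hlogk : (0:ℝ) < Real.log k := lt_of_lt_of_le (by linarith) hlogL
    set ρ : ℝ := σ * k / Real.log k with hρdef
    have hρ0 : (0:ℝ) ≤ ρ := by positivity
    set m : ℕ := ⌊ρ⌋₊ with hmdef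
    have hmρ : (m:ℝ) ≤ ρ := Nat.floor_le hρ0
    have hρσk : ρ * Real.log k = σ * k := div_mul_cancel₀ _ (ne_of_gt hlogk)
    have hρle : ρ ≤ ε / 4 * k := by
      rw [hρdef, div_le_iff₀ hlogk]
      calc σ * k = ε / 4 * k * L := by rw [hσdef]; ring
        _ ≤ ε / 4 * k * Real.log k := by
            apply mul_le_mul_of_nonneg_left hlogL (by positivity)
    have hmk : m ≤ k := by
      have h1 : (m:ℝ) ≤ (k:ℝ) := le_trans hmρ (le_trans hρle (by nlinarith))
      exact_mod_cast h1
    -- names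
    set G : (Fin k → Fin (A ^ n)) → Finset (Fin k) := fun j =>
      Finset.univ.filter fun i : Fin k =>
        ¬ max (N ((List.ofFn j).take i.val) / (1 + c)) N₀ ≤
          N ((List.ofFn j).take i.val ++ [j i]) with hGdef
    set Bad : Finset (Fin k → Fin (A ^ n)) := Finset.univ.filter fun j =>
      max (N [] / (1 + c) ^ ρ) N₀ ≤ N (List.ofFn j) with hBadDef
    -- good-step count is at most m on Bad
    have hgood : ∀ j ∈ Bad, (G j).card ≤ m := by
      intro j hj
      rw [hBadDef, Finset.mem_filter] at hj
      have hmax := hj.2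
      have hN0' : N₀ ≤ N (List.ofFn j) := le_trans (le_max_right _ _) hmax
      have hNe : 0 < N [] :=
        lt_of_lt_of_le hN₀ (le_trans hN0' (hmono _ _ (List.nil_prefix)))
      have hd := descent_aux c N₀ hc hN₀ N hmono k j hN0'
      have hρpow : (0:ℝ) < (1 + c) ^ ρ := Real.rpow_pos_of_pos (by linarith) _
      have h1 : N [] / (1 + c) ^ ρ ≤ N (List.ofFn j) := le_trans (le_max_left _ _) hmax
      have h2 : N [] / (1 + c) ^ ρ * (1 + c) ^ ((G j).card) ≤ N [] := by
        refine le_trans (mul_le_mul_of_nonneg_right h1 (by positivity)) ?_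
        simpa [hGdef] using hd
      rw [div_mul_eq_mul_div, div_le_iff₀ hρpow] at h2
      have h3 : ((1 + c):ℝ) ^ ((G j).card : ℕ) ≤ (1 + c) ^ ρ :=
        le_of_mul_le_mul_left (by linarith) hNe
      rw [← Real.rpow_natCast (1 + c) ((G j).card)] at h3
      exact Nat.le_floor ((Real.rpow_le_rpow_left_iff (by linarith)).mp h3)
    -- fiber decomposition
    have hdecomp : Bad.card
        = ∑ S ∈ (Finset.univ : Finset (Fin k)).powerset, (Bad.filter fun j => G j = S).card :=
      Finset.card_eq_sum_card_fiberwise fun j _ => Finset.mem_powerset.mpr (Finset.subset_univ _)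
    set U : ℝ := ((A:ℝ) ^ n) ^ k / (2 * (A:ℝ)) ^ (k - m) with hUdef
    have hU0 : (0:ℝ) ≤ U := by positivity
    have hBQ : (A:ℝ) ^ (n - 1) / 2 = (A:ℝ) ^ n / (2 * (A:ℝ)) := by
      have hAn : (A:ℝ) ^ n = (A:ℝ) ^ (n - 1) * A := by
        conv_lhs => rw [show n = (n - 1) + 1 by omega]
        rw [pow_succ]
      rw [hAn]
      field_simp
    -- bound on each fiber
    have hfb : ∀ S ∈ (Finset.univ : Finset (Fin k)).powerset,
        ((Bad.filter fun j => G j = S).card : ℝ) ≤ if S.card ≤ m then U else 0 := by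
      intro S hSmem
      have hSk : S.card ≤ k :=
        le_trans (Finset.card_le_card (Finset.mem_powerset.mp hSmem)) (by simp)
      by_cases hSm : S.card ≤ m
      · rw [if_pos hSm]
        have hsub : (Bad.filter fun j => G j = S) ⊆
            Finset.univ.filter fun jj : Fin k → Fin (A ^ n) =>
              ∀ i : Fin k, (decide (i ∉ S)) = true →
                max (N (([] : List (Fin (A ^ n))) ++ (List.ofFn jj).take i.val) / (1 + c)) N₀ ≤
                  N ((([] : List (Fin (A ^ n))) ++ (List.ofFn jj).take i.val) ++ [jj i]) := by
          intro jj hjj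
          simp only [Finset.mem_filter, Finset.mem_univ, true_and] at hjj ⊢
          intro i hi
          rw [decide_eq_true_eq] at hi
          have hiG : i ∉ G jj := hjj.2 ▸ hi
          rw [hGdef] at hiG
          simp only [Finset.mem_filter, Finset.mem_univ, true_and, not_not] at hiG
          simpa using hiG
        have hca := count_aux ((A:ℝ) ^ (n - 1) / 2) (by positivity)
          (fun s x => max (N s / (1 + c)) N₀ ≤ N (s ++ [x])) hhalf
          k (fun i => decide (i ∉ S)) []
        have haS : (Finset.univ.filter fun i : Fin k => (decide (i ∉ S)) = false).card
            = S.card := by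
          congr 1
          ext i
          simp
        have hbS : (Finset.univ.filter fun i : Fin k => (decide (i ∉ S)) = true).card
            = k - S.card := by
          have h1 : (Finset.univ.filter fun i : Fin k => (decide (i ∉ S)) = true) = Sᶜ := by
            ext i
            simp [Finset.mem_compl]
          rw [h1, Finset.card_compl, Fintype.card_fin]
        rw [haS, hbS] at hca
        have hbound : ((Fintype.card (Fin (A ^ n)) : ℕ) : ℝ) ^ S.card
            * ((A:ℝ) ^ (n - 1) / 2) ^ (k - S.card) ≤ U := by
          have hcX : ((Fintype.card (Fin (A ^ n)) : ℕ) : ℝ) = (A:ℝ) ^ n := by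
            rw [Fintype.card_fin]; push_cast; ring
          rw [hcX, hBQ]
          calc ((A:ℝ) ^ n) ^ S.card * ((A:ℝ) ^ n / (2 * (A:ℝ))) ^ (k - S.card)
              = ((A:ℝ) ^ n) ^ k / (2 * (A:ℝ)) ^ (k - S.card) := by
                rw [div_pow, ← mul_div_assoc, ← pow_add,
                  show S.card + (k - S.card) = k by omega]
            _ ≤ ((A:ℝ) ^ n) ^ k / (2 * (A:ℝ)) ^ (k - m) := by
                apply div_le_div_of_nonneg_left (by positivity) (by positivity)
                exact pow_le_pow_right₀ (by linarith) (by omega)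
        exact le_trans (by exact_mod_cast Nat.cast_le.mpr (Finset.card_le_card hsub))
          (le_trans hca hbound)
      · rw [if_neg hSm]
        have hemp : Bad.filter (fun j => G j = S) = ∅ := by
          rw [Finset.filter_eq_empty_iff]
          intro j hj hGj
          exact hSm (hGj ▸ hgood j hj)
        simp [hemp]
    -- count of small subsets
    have hcount : ((Finset.univ : Finset (Fin k)).powerset.filter fun S => S.card ≤ m).card
        ≤ (m + 1) * k ^ m := by
      have hsub : ((Finset.univ : Finset (Fin k)).powerset.filter fun S => S.card ≤ m) ⊆
          (Finset.range (m + 1)).biUnion fun i =>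
            Finset.powersetCard i (Finset.univ : Finset (Fin k)) := by
        intro S hS
        simp only [Finset.mem_filter, Finset.mem_powerset] at hS
        simp only [Finset.mem_biUnion, Finset.mem_range, Finset.mem_powersetCard]
        exact ⟨S.card, Nat.lt_succ_of_le hS.2, hS.1, rfl⟩
      refine le_trans (Finset.card_le_card hsub) (le_trans Finset.card_biUnion_le ?_)
      have hterm : ∀ i ∈ Finset.range (m + 1),
          (Finset.powersetCard i (Finset.univ : Finset (Fin k))).card ≤ k ^ m := by
        intro i hi
        rw [Finset.card_powersetCard, Finset.card_univ, Fintype.card_fin]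
        exact le_trans (Nat.choose_le_pow k i)
          (Nat.pow_le_pow_right (by omega) (Nat.lt_succ_iff.mp (Finset.mem_range.mp hi)))
      calc ∑ i ∈ Finset.range (m + 1),
            (Finset.powersetCard i (Finset.univ : Finset (Fin k))).card
          ≤ ∑ _i ∈ Finset.range (m + 1), k ^ m := Finset.sum_le_sum hterm
        _ = (m + 1) * k ^ m := by rw [Finset.sum_const, Finset.card_range, smul_eq_mul]
    -- total bound so far
    have htotal : (Bad.card : ℝ) ≤ ((m + 1) * k ^ m : ℕ) * U := by
      calc (Bad.card : ℝ)
          = ∑ S ∈ (Finset.univ : Finset (Fin k)).powerset,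
              ((Bad.filter fun j => G j = S).card : ℝ) := by
            rw [hdecomp]; push_cast; rfl
        _ ≤ ∑ S ∈ (Finset.univ : Finset (Fin k)).powerset,
              (if S.card ≤ m then U else 0) := Finset.sum_le_sum hfb
        _ = (((Finset.univ : Finset (Fin k)).powerset.filter fun S => S.card ≤ m).card : ℝ) * U := by
            rw [Finset.sum_ite, Finset.sum_const, Finset.sum_const_zero, add_zero,
              nsmul_eq_mul]
        _ ≤ ((m + 1) * k ^ m : ℕ) * U := by
            apply mul_le_mul_of_nonneg_right _ hU0
            exact_mod_cast hcount
    -- analytic estimate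
    have hkey : (((m:ℝ) + 1) * (k:ℝ) ^ m) / (2 * (A:ℝ)) ^ (k - m)
        ≤ (1 / (2 * (A:ℝ))) ^ ((k : ℝ) * (1 - ε)) := by
      have hTk : (0:ℝ) < (2 * (A:ℝ)) ^ (k - m) := by positivity
      rw [div_le_iff₀ hTk]
      have hR : (1 / (2 * (A:ℝ))) ^ ((k : ℝ) * (1 - ε)) * (2 * (A:ℝ)) ^ (k - m)
          = (2 * (A:ℝ)) ^ (ε * k - m) := by
        rw [one_div, Real.inv_rpow hT0.le, ← Real.rpow_neg hT0.le,
          ← Real.rpow_natCast (2 * (A:ℝ)) (k - m), ← Real.rpow_add hT0]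
        congr 1
        rw [Nat.cast_sub hmk]
        ring
      rw [hR, Real.rpow_def_of_pos hT0, ← hLdef]
      have hlhspos : (0:ℝ) < ((m:ℝ) + 1) * (k:ℝ) ^ m := by positivity
      rw [← Real.exp_log hlhspos, Real.exp_le_exp,
        Real.log_mul (by positivity) (by positivity), Real.log_pow]
      -- goal : log (m+1) + m * log k ≤ L * (ε * k - m)
      have p1 : (m:ℝ) * Real.log k ≤ σ * k := by
        calc (m:ℝ) * Real.log k ≤ ρ * Real.log k :=
              mul_le_mul_of_nonneg_right hmρ hlogk.le
          _ = σ * k := hρσk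
      have p2 : (m:ℝ) * L ≤ σ * k := by
        calc (m:ℝ) * L ≤ (m:ℝ) * Real.log k :=
              mul_le_mul_of_nonneg_left hlogL (Nat.cast_nonneg m)
          _ ≤ σ * k := p1
      have p3 : Real.log ((m:ℝ) + 1) ≤ Real.log (σ + 1) + Real.log k := by
        have hmσk : (m:ℝ) ≤ σ * k := by
          calc (m:ℝ) ≤ ρ := hmρ
            _ ≤ σ * k := by
                rw [hρdef]
                exact div_le_self (by positivity) (by linarith)
        have hm1 : (m:ℝ) + 1 ≤ (σ + 1) * k := by nlinarith
        calc Real.log ((m:ℝ) + 1) ≤ Real.log ((σ + 1) * k) :=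
              Real.log_le_log (by positivity) hm1
          _ = Real.log (σ + 1) + Real.log k := Real.log_mul (by positivity) (by positivity)
      have p4 : σ * k * 4 = L * (ε * k) := by rw [hσdef]; ring
      nlinarith [p1, p2, p3, hconst, hloglin]
    -- put everything together
    have hfinal : ((m + 1) * k ^ m : ℕ) * U
        ≤ (A : ℝ) ^ (n * k) * (1 / (2 * (A:ℝ))) ^ ((k : ℝ) * (1 - ε)) := by
      rw [hUdef, pow_mul]
      have hQk0 : (0:ℝ) ≤ ((A:ℝ) ^ n) ^ k := by positivity
      calc (((m + 1) * k ^ m : ℕ) : ℝ) * (((A:ℝ) ^ n) ^ k / (2 * (A:ℝ)) ^ (k - m))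
          = ((A:ℝ) ^ n) ^ k * ((((m:ℝ) + 1) * (k:ℝ) ^ m) / (2 * (A:ℝ)) ^ (k - m)) := by
            push_cast
            ring
        _ ≤ ((A:ℝ) ^ n) ^ k * (1 / (2 * (A:ℝ))) ^ ((k : ℝ) * (1 - ε)) :=
            mul_le_mul_of_nonneg_left hkey hQk0
    exact le_trans htotal hfinal
  · -- the equality

    have h1 : (1 / (2 * (A:ℝ))) ^ ((k : ℝ) * (1 - ε))
        = (1 / (A:ℝ)) ^ ((1 + c₂) * (k:ℝ)) := by
      rw [mul_comm (k:ℝ) (1 - ε), Real.rpow_mul (by positivity), hεc₂,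
        ← Real.rpow_mul (by positivity)]
    have h2 : (1 / (A:ℝ)) ^ ((1 + c₂) * (k:ℝ)) = (A:ℝ) ^ (-((1 + c₂) * (k:ℝ))) := by
      rw [one_div, Real.inv_rpow hA0.le, Real.rpow_neg hA0.le]
    have h3 : ((A:ℝ)) ^ (n * k) = (A:ℝ) ^ ((n * k : ℕ) : ℝ) := by
      rw [Real.rpow_natCast]
    rw [h1, h2, h3, ← Real.rpow_add hA0]
    congr 1
    push_cast
    ring
end

section
/- Let u be harmonic on B(p,R) ⊂ ℝⁿ with u not identically zero, and define H(p,r) = ∫_{∂B(p,r)} u² dS and the frequency β(p,r) = r·H'(p,r)/(2·H(p,r)). Then for 0 < r₁ < r₂ < R, H(p,r₂)/H(p,r₁) = exp(2 ∫_{r₁}^{r₂} β(p,r) d(log r)), and if β is non-decreasing in r then (r₂/r₁)^{2β(p,r₁)} ≤ H(p,r₂)/H(p,r₁) ≤ (r₂/r₁)^{2β(p,r₂)}. -/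
open Real Metric Set MeasureTheory intervalIntegral

/-- `u` is harmonic on `s ⊆ ℝⁿ`. -/
def IsHarmonicOn {n : ℕ} (u : EuclideanSpace ℝ (Fin n) → ℝ)
    (s : Set (EuclideanSpace ℝ (Fin n))) : Prop :=
  ContDiffOn ℝ 2 u s ∧ ∀ x ∈ s,
    ∑ i : Fin n,
      (fderiv ℝ (fun y => fderiv ℝ u y (EuclideanSpace.single i 1)) x)
        (EuclideanSpace.single i 1) = 0

/-- `H p r = ∫_{∂B(p,r)} u² dS`: the integral of `u²` over the sphere of radius `r`
around `p`, written via the surface measure on the unit sphere. -/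
noncomputable def sphereL2 {n : ℕ} (u : EuclideanSpace ℝ (Fin n) → ℝ)
    (p : EuclideanSpace ℝ (Fin n)) (r : ℝ) : ℝ :=
  r ^ (n - 1) * ∫ y : Metric.sphere (0 : EuclideanSpace ℝ (Fin n)) 1,
    (u (p + r • (y : EuclideanSpace ℝ (Fin n))))^2 ∂((volume : Measure (EuclideanSpace ℝ (Fin n))).toSphere)

/-! Since `u` is `C¹` on the ball, `r ↦ H(p,r)` is a power of `r` times an integral over the unit
sphere that is Lipschitz in `r`, hence absolutely continuous on compact subintervals of `(0,R)`.
This is what makes the pointwise derivative `H'` integrable, so the fundamental theorem of calculus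
applies to `log H` and gives `log H(r₂) - log H(r₁) = ∫ H'/H = 2 ∫ β d(log r)`. For monotone `β`,
bounding `β` on `[r₁, r₂]` by its endpoint values bounds that integral by `β(rᵢ) log(r₂/r₁)`. -/

open scoped NNReal

theorem lipschitzOnWith_integral {α X E : Type*} [PseudoMetricSpace α] [MeasurableSpace X]
    [NormedAddCommGroup E] [NormedSpace ℝ E] {μ : Measure X} [IsFiniteMeasure μ]
    {F : α → X → E} {s : Set α} {K : ℝ≥0}
    (hF : ∀ x, LipschitzOnWith K (F · x) s) (hint : ∀ a ∈ s, Integrable (F a) μ) :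
    LipschitzOnWith (K * (μ univ).toNNReal) (fun a => ∫ x, F a x ∂μ) s := by
  refine LipschitzOnWith.of_dist_le_mul fun a ha b hb => ?_
  rw [dist_eq_norm, ← integral_sub (hint a ha) (hint b hb)]
  calc ‖∫ x, F a x - F b x ∂μ‖ ≤ K * dist a b * μ.real univ :=
        norm_integral_le_of_norm_le_const (ae_of_all _ fun x => by
          rw [← dist_eq_norm]; exact (hF x).dist_le_mul a ha b hb)
    _ = K * (μ univ).toNNReal * dist a b := by push_cast [measureReal_def]; ring

theorem absolutelyContinuousOnInterval_sphereL2 {n : ℕ} {u : EuclideanSpace ℝ (Fin n) → ℝ}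
    {p : EuclideanSpace ℝ (Fin n)} {R c : ℝ} (hu : ContDiffOn ℝ 1 u (ball p R))
    (hc : 0 ≤ c) (hcR : c < R) :
    AbsolutelyContinuousOnInterval (sphereL2 u p) (-c) c := by
  obtain ⟨K, hK⟩ := ((hu.pow 2).mono (closedBall_subset_ball hcR)).exists_lipschitzOnWith
    one_ne_zero (convex_closedBall p c) (isCompact_closedBall p c)
  have hmaps (y : sphere (0 : EuclideanSpace ℝ (Fin n)) 1) :
      MapsTo (fun r : ℝ => p + r • (y : EuclideanSpace ℝ (Fin n))) (uIcc (-c) c)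
        (closedBall p c) := by
    intro r hr
    rw [uIcc_of_le (by linarith)] at hr
    simpa [norm_smul, abs_le] using hr
  have hline (y : sphere (0 : EuclideanSpace ℝ (Fin n)) 1) :
      LipschitzWith 1 (fun r : ℝ => p + r • (y : EuclideanSpace ℝ (Fin n))) :=
    LipschitzWith.of_dist_le_mul fun r s => by
      simp [dist_eq_norm, ← sub_smul, norm_smul]
  have hG := lipschitzOnWith_integral
    (μ := (volume : Measure (EuclideanSpace ℝ (Fin n))).toSphere)
    (fun y => hK.comp (hline y).lipschitzOnWith (hmaps y)) fun r hr =>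
      Continuous.integrable_of_hasCompactSupport
        (hK.continuousOn.comp_continuous (by fun_prop) fun y => hmaps y hr)
        (HasCompactSupport.of_compactSpace _)
  exact ((contDiff_id.pow (n - 1)).contDiffOn.absolutelyContinuousOnInterval).fun_mul
    hG.absolutelyContinuousOnInterval

theorem div_eq_exp_integral_deriv_div {H H' : ℝ → ℝ} {a b : ℝ}
    (hac : AbsolutelyContinuousOnInterval H a b)
    (hderiv : ∀ x ∈ uIcc a b, HasDerivAt H (H' x) x) (hpos : ∀ x ∈ uIcc a b, 0 < H x) :
    H b / H a = exp (∫ x in a..b, H' x / H x) := by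
  have hint : IntervalIntegrable (fun x => H' x / H x) volume a b := by
    have hH' : IntervalIntegrable H' volume a b :=
      hac.intervalIntegrable_deriv.congr fun x hx => (hderiv x (uIoc_subset_uIcc hx)).deriv
    simpa [div_eq_mul_inv] using hH'.mul_continuousOn
      (HasDerivAt.continuousOn hderiv |>.inv₀ fun x hx => (hpos x hx).ne')
  rw [integral_eq_sub_of_hasDerivAt (fun x hx => (hderiv x hx).log (hpos x hx).ne') hint,
    exp_sub, exp_log (hpos b right_mem_uIcc), exp_log (hpos a left_mem_uIcc)]

theorem MonotoneOn.integral_div_mem_Icc {β : ℝ → ℝ} {a b : ℝ} (ha : 0 < a) (hab : a ≤ b)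
    (hβ : MonotoneOn β (Icc a b)) :
    ∫ r in a..b, β r / r ∈ Icc (β a * log (b / a)) (β b * log (b / a)) := by
  have hb : 0 < b := ha.trans_le hab
  have hinv : ContinuousOn (fun r : ℝ => r⁻¹) (uIcc a b) :=
    continuousOn_inv₀.mono fun r hr => (ha.trans_le (uIcc_of_le hab ▸ hr).1).ne'
  have hconst (c : ℝ) : ∫ r in a..b, c / r = c * log (b / a) := by
    simp only [div_eq_mul_inv c, intervalIntegral.integral_const_mul, integral_inv_of_pos ha hb]
  have hint (f : ℝ → ℝ) (hf : IntervalIntegrable f volume a b) :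
      IntervalIntegrable (fun r => f r / r) volume a b := by
    simpa [div_eq_mul_inv] using hf.mul_continuousOn hinv
  have hβint := hint β (MonotoneOn.intervalIntegrable (by rwa [uIcc_of_le hab]))
  rw [← hconst, ← hconst]
  exact ⟨intervalIntegral.integral_mono_on hab (hint _ intervalIntegrable_const) hβint
      fun r hr => div_le_div_of_nonneg_right (hβ (left_mem_Icc.2 hab) hr hr.1)
        (ha.trans_le hr.1).le,
    intervalIntegral.integral_mono_on hab hβint (hint _ intervalIntegrable_const)
      fun r hr => div_le_div_of_nonneg_right (hβ hr (right_mem_Icc.2 hab) hr.2)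
        (ha.trans_le hr.1).le⟩

theorem frequency_growth_general (n : ℕ) (u : EuclideanSpace ℝ (Fin n) → ℝ)
    (p : EuclideanSpace ℝ (Fin n)) (R : ℝ)
    (hu : IsHarmonicOn u (ball p R))
    (H' : ℝ → ℝ)
    (hderiv : ∀ r ∈ Set.Ioo (0:ℝ) R, HasDerivAt (sphereL2 u p) (H' r) r)
    (hpos : ∀ r ∈ Set.Ioo (0:ℝ) R, 0 < sphereL2 u p r)
    (β : ℝ → ℝ) (hβ : ∀ r, β r = r * H' r / (2 * sphereL2 u p r))
    (r₁ r₂ : ℝ) (h1 : 0 < r₁) (h12 : r₁ < r₂) (h2 : r₂ < R) :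
    sphereL2 u p r₂ / sphereL2 u p r₁ =
      Real.exp (2 * ∫ r in r₁..r₂, β r / r) ∧
    (MonotoneOn β (Set.Ioo (0:ℝ) R) →
      (r₂ / r₁) ^ (2 * β r₁) ≤ sphereL2 u p r₂ / sphereL2 u p r₁ ∧
      sphereL2 u p r₂ / sphereL2 u p r₁ ≤ (r₂ / r₁) ^ (2 * β r₂)) := by
  have hIcc : Icc r₁ r₂ ⊆ Ioo 0 R := Icc_subset_Ioo h1 h2
  have hsub : uIcc r₁ r₂ ⊆ Ioo 0 R := uIcc_of_le h12.le ▸ hIcc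
  have hac : AbsolutelyContinuousOnInterval (sphereL2 u p) r₁ r₂ :=
    (absolutelyContinuousOnInterval_sphereL2 (hu.1.of_le one_le_two) (h1.trans h12).le h2).mono
      (by rw [uIcc_of_le h12.le, uIcc_of_le (by linarith)]
          exact Icc_subset_Icc (by linarith) le_rfl)
  have hratio := div_eq_exp_integral_deriv_div hac (fun r hr => hderiv r (hsub hr))
    fun r hr => hpos r (hsub hr)
  have hfreq : ∫ r in r₁..r₂, H' r / sphereL2 u p r = 2 * ∫ r in r₁..r₂, β r / r := by
    rw [← intervalIntegral.integral_const_mul]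
    refine intervalIntegral.integral_congr fun r hr => ?_
    rw [hβ]
    field_simp [(hsub hr).1.ne', (hpos r (hsub hr)).ne']
  rw [hfreq] at hratio
  refine ⟨hratio, fun hmono => ?_⟩
  obtain ⟨hlow, hupp⟩ := (hmono.mono hIcc).integral_div_mem_Icc h1 h12.le
  have hq : 0 < r₂ / r₁ := div_pos (h1.trans h12) h1
  rw [hratio, rpow_def_of_pos hq, rpow_def_of_pos hq]
  exact ⟨exp_le_exp.2 (by linarith), exp_le_exp.2 (by linarith)⟩

/-- For `u` harmonic on `B(p,R)`, with `H(p,r) = ∫_{∂B(p,r)} u²` positive and differentiable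
and frequency `β(p,r) = r H'(p,r)/(2H(p,r))`, one has
`H(p,r₂)/H(p,r₁) = exp(2∫_{r₁}^{r₂} β(p,r) dlog r)`, and if `β` is non-decreasing then
`(r₂/r₁)^{2β(p,r₁)} ≤ H(p,r₂)/H(p,r₁) ≤ (r₂/r₁)^{2β(p,r₂)}`. -/
theorem frequency_growth (n : ℕ) (u : EuclideanSpace ℝ (Fin n) → ℝ)
    (p : EuclideanSpace ℝ (Fin n)) (R : ℝ) (hR : 0 < R)
    (hu : IsHarmonicOn u (ball p R))
    (hne : ¬ ∀ y ∈ ball p R, u y = 0)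
    (H' : ℝ → ℝ)
    (hderiv : ∀ r ∈ Set.Ioo (0:ℝ) R, HasDerivAt (sphereL2 u p) (H' r) r)
    (hpos : ∀ r ∈ Set.Ioo (0:ℝ) R, 0 < sphereL2 u p r)
    (β : ℝ → ℝ) (hβ : ∀ r, β r = r * H' r / (2 * sphereL2 u p r))
    (r₁ r₂ : ℝ) (h1 : 0 < r₁) (h12 : r₁ < r₂) (h2 : r₂ < R) :
    sphereL2 u p r₂ / sphereL2 u p r₁ =
      Real.exp (2 * ∫ r in r₁..r₂, β r / r) ∧
    (MonotoneOn β (Set.Ioo (0:ℝ) R) →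
      (r₂ / r₁) ^ (2 * β r₁) ≤ sphereL2 u p r₂ / sphereL2 u p r₁ ∧
      sphereL2 u p r₂ / sphereL2 u p r₁ ≤ (r₂ / r₁) ^ (2 * β r₂)) :=
  frequency_growth_general n u p R hu H' hderiv hpos β hβ r₁ r₂ h1 h12 h2
end
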